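/- arXiv:1108.5488 — 6 statements merged into one kernel-verified Lean document; each statement's English description precedes it below -/
import Mathlib

section
/- Let (Ω,ℱ,P) be a probability space, 𝒟 a sub-σ-field, D ∈ 𝒟 an event, and ξ, η integrable random variables with E[η] = 0, η independent of 𝒟, and ξ and η conditionally independent given 𝒟. Then E[ξ ∨ (η·1_D)] ≤ E[ξ ∨ η], where ∨ denotes maximum. -/
open MeasureTheory ProbabilityTheory Set MeasurableSpace

/-! Put `A = Dᶜ ∩ {ξ < 0}`. Pointwise `ξ ∨ (η 1_D) + η 1_A ≤ ξ ∨ η`, so it suffices that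
`E[η 1_A] = 0`. For `B ∈ 𝒟`, conditional independence and the independence of `η` from `𝒟` give
`P(B, ξ ∈ s, η ∈ t) = E[1_B P(ξ ∈ s | 𝒟) P(η ∈ t | 𝒟)] = P(B, ξ ∈ s) P(η ∈ t)`,
so `η` is independent of the event `A`, and `E[η 1_A] = P(A) E[η] = 0`. -/

section

variable {Ω β β' : Type*} {m mΩ : MeasurableSpace Ω} {μ : Measure Ω}
  {mβ : MeasurableSpace β} {mβ' : MeasurableSpace β'}

lemma ProbabilityTheory.CondIndepFun.congr_ae [StandardBorelSpace Ω] [IsFiniteMeasure μ]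
    {hm : m ≤ mΩ} {f f' : Ω → β} {g g' : Ω → β'}
    (h : CondIndepFun m hm f g μ) (hf : f =ᵐ[μ] f') (hg : g =ᵐ[μ] g') :
    CondIndepFun m hm f' g' μ := by
  refine Kernel.IndepFun.congr' h ?_ ?_ <;>
  · apply Measure.ae_ae_of_ae_comp
    rwa [condExpKernel_comp_trim]

lemma ProbabilityTheory.Indep.comap_congr_ae {f f' : Ω → β}
    (h : Indep (mβ.comap f) m μ) (hf : f =ᵐ[μ] f') : Indep (mβ.comap f') m μ := by
  rw [Indep_iff] at h ⊢
  rintro _ t ⟨s, hs, rfl⟩ ht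
  have hfs : f ⁻¹' s =ᵐ[μ] f' ⁻¹' s := hf.fun_comp (· ∈ s)
  rw [← measure_congr hfs, ← measure_congr (hfs.inter (ae_eq_refl t))]
  exact h _ t ⟨s, hs, rfl⟩ ht

lemma setIntegral_condExp_indicator_one [IsFiniteMeasure μ] (hm : m ≤ mΩ) {B S : Set Ω}
    (hB : MeasurableSet[m] B) (hS : MeasurableSet S) :
    ∫ ω in B, (μ⟦S | m⟧) ω ∂μ = μ.real (B ∩ S) := by
  rw [setIntegral_condExp hm ((integrable_const 1).indicator hS) hB,
    setIntegral_indicator hS, setIntegral_const, smul_eq_mul, mul_one]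

lemma condExp_preimage_ae_eq_measureReal_of_indep [IsFiniteMeasure μ] (hm : m ≤ mΩ) {f : Ω → β}
    (hf : Measurable f) (hindep : Indep (mβ.comap f) m μ) {t : Set β} (ht : MeasurableSet t) :
    μ⟦f ⁻¹' t | m⟧ =ᵐ[μ] fun _ => μ.real (f ⁻¹' t) := by
  have hsm : StronglyMeasurable[mβ.comap f] ((f ⁻¹' t).indicator fun _ => (1 : ℝ)) :=
    stronglyMeasurable_const.indicator ⟨t, ht, rfl⟩
  exact (condExp_indep_eq hf.comap_le hm hsm hindep).trans
    (ae_of_all _ fun _ => integral_indicator_one (hf ht))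

lemma measure_inter_preimage_inter_preimage_eq_mul [StandardBorelSpace Ω]
    [IsFiniteMeasure μ] (hm : m ≤ mΩ) {f : Ω → β} {g : Ω → β'} (hf : Measurable f)
    (hg : Measurable g) (hindep : Indep (mβ'.comap g) m μ) (hci : CondIndepFun m hm f g μ)
    {B : Set Ω} (hB : MeasurableSet[m] B) {s : Set β} {t : Set β'} (hs : MeasurableSet s)
    (ht : MeasurableSet t) :
    μ (B ∩ f ⁻¹' s ∩ g ⁻¹' t) = μ (B ∩ f ⁻¹' s) * μ (g ⁻¹' t) := by
  have hreal : μ.real (B ∩ (f ⁻¹' s ∩ g ⁻¹' t)) = μ.real (B ∩ f ⁻¹' s) * μ.real (g ⁻¹' t) :=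
    calc μ.real (B ∩ (f ⁻¹' s ∩ g ⁻¹' t))
        = ∫ ω in B, (μ⟦f ⁻¹' s ∩ g ⁻¹' t | m⟧) ω ∂μ :=
          (setIntegral_condExp_indicator_one hm hB ((hf hs).inter (hg ht))).symm
      _ = ∫ ω in B, (μ⟦f ⁻¹' s | m⟧) ω * μ.real (g ⁻¹' t) ∂μ := by
          refine setIntegral_congr_ae (hm B hB) ?_
          filter_upwards [(condIndepFun_iff_condExp_inter_preimage_eq_mul hf hg).1 hci s t hs ht,
            condExp_preimage_ae_eq_measureReal_of_indep hm hg hindep ht] with ω h_mul h_const _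
          rw [h_mul, h_const]
      _ = μ.real (B ∩ f ⁻¹' s) * μ.real (g ⁻¹' t) := by
          rw [integral_mul_const, setIntegral_condExp_indicator_one hm hB (hf hs)]
  rw [inter_assoc, ← ENNReal.toReal_eq_toReal_iff' (measure_ne_top _ _)
    (ENNReal.mul_ne_top (measure_ne_top _ _) (measure_ne_top _ _)), ENNReal.toReal_mul]
  exact hreal

lemma indep_comap_generateFrom_inter_preimage [StandardBorelSpace Ω]
    [IsProbabilityMeasure μ] (hm : m ≤ mΩ) {f : Ω → β} {g : Ω → β'} (hf : Measurable f)
    (hg : Measurable g) (hindep : Indep (mβ'.comap g) m μ) (hci : CondIndepFun m hm f g μ)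
    {B : Set Ω} (hB : MeasurableSet[m] B) {s : Set β} (hs : MeasurableSet s) :
    Indep (mβ'.comap g) (generateFrom {B ∩ f ⁻¹' s}) μ := by
  refine IndepSets.indep hg.comap_le (generateFrom_singleton_le ((hm B hB).inter (hf hs)))
    (@isPiSystem_measurableSet Ω (mβ'.comap g)) (IsPiSystem.singleton _)
    (@generateFrom_measurableSet Ω (mβ'.comap g)).symm rfl ?_
  rw [IndepSets_iff]
  rintro _ _ ⟨t, ht, rfl⟩ rfl
  rw [inter_comm, measure_inter_preimage_inter_preimage_eq_mul hm hf hg hindep hci hB hs ht,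
    mul_comm]

lemma setIntegral_eq_measureReal_mul_integral_of_indep [IsFiniteMeasure μ] {g : Ω → ℝ}
    (hg : Measurable g) (hg_int : Integrable g μ) {A : Set Ω} (hA : MeasurableSet A)
    (hindep : Indep (MeasurableSpace.comap g inferInstance) (generateFrom {A}) μ) :
    ∫ ω in A, g ω ∂μ = μ.real A * ∫ ω, g ω ∂μ := by
  have hAm : generateFrom {A} ≤ mΩ := generateFrom_singleton_le hA
  rw [← setIntegral_condExp hAm hg_int (measurableSet_generateFrom rfl),
    setIntegral_congr_ae hA ((condExp_indep_eq hg.comap_le hAm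
      (comap_measurable g).stronglyMeasurable hindep).mono fun _ h _ => h),
    setIntegral_const, smul_eq_mul]

lemma max_mul_indicator_add_indicator_le (D : Set Ω) (x y : Ω → ℝ) (ω : Ω) :
    max (x ω) (y ω * D.indicator (fun _ => (1 : ℝ)) ω) + (Dᶜ ∩ x ⁻¹' Iio 0).indicator y ω ≤
      max (x ω) (y ω) := by
  by_cases hD : ω ∈ D
  · simp [hD]
  by_cases hx : x ω < 0
  · simp [hD, hx, max_eq_right hx.le]
  · simp [hD, hx, not_lt.1 hx]

theorem integral_max_mul_indicator_le [StandardBorelSpace Ω] [IsProbabilityMeasure μ]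
    (hm : m ≤ mΩ) {D : Set Ω} (hD : MeasurableSet[m] D) {ξ η : Ω → ℝ} (hξm : Measurable ξ)
    (hηm : Measurable η) (hξ : Integrable ξ μ) (hη : Integrable η μ)
    (hmean : ∫ ω, η ω ∂μ = 0) (hindep : Indep (MeasurableSpace.comap η inferInstance) m μ)
    (hci : CondIndepFun m hm ξ η μ) :
    ∫ ω, max (ξ ω) (η ω * D.indicator (fun _ => (1 : ℝ)) ω) ∂μ ≤ ∫ ω, max (ξ ω) (η ω) ∂μ := by
  set A := Dᶜ ∩ ξ ⁻¹' Iio 0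
  have hA : MeasurableSet A := (hm _ hD.compl).inter (hξm measurableSet_Iio)
  have hA_zero : ∫ ω in A, η ω ∂μ = 0 := by
    rw [setIntegral_eq_measureReal_mul_integral_of_indep hηm hη hA
      (indep_comap_generateFrom_inter_preimage hm hξm hηm hindep hci hD.compl measurableSet_Iio),
      hmean, mul_zero]
  have hint : Integrable (fun ω => max (ξ ω) (η ω * D.indicator (fun _ => (1 : ℝ)) ω)) μ := by
    simp_rw [← indicator_mul_right, mul_one]
    exact hξ.sup (hη.indicator (hm _ hD))
  calc ∫ ω, max (ξ ω) (η ω * D.indicator (fun _ => (1 : ℝ)) ω) ∂μ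
      = ∫ ω, max (ξ ω) (η ω * D.indicator (fun _ => (1 : ℝ)) ω) + A.indicator η ω ∂μ := by
        rw [integral_add hint (hη.indicator hA), integral_indicator hA, hA_zero, add_zero]
    _ ≤ ∫ ω, max (ξ ω) (η ω) ∂μ :=
        integral_mono (hint.add (hη.indicator hA)) (hξ.sup hη)
          (max_mul_indicator_add_indicator_le D ξ η)

end

theorem stmt3_general {Ω : Type*} [mΩ : MeasurableSpace Ω] [StandardBorelSpace Ω]
    (μ : Measure Ω) [IsProbabilityMeasure μ]
    (m : MeasurableSpace Ω) (hm : m ≤ mΩ)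
    (D : Set Ω) (hD : MeasurableSet[m] D)
    (ξ η : Ω → ℝ) (hξ : Integrable ξ μ) (hη : Integrable η μ)
    (hmean : ∫ ω, η ω ∂μ = 0)
    (hindep : Indep (MeasurableSpace.comap η (inferInstance : MeasurableSpace ℝ)) m μ)
    (hci : CondIndepFun m hm ξ η μ) :
    ∫ ω, max (ξ ω) (η ω * Set.indicator D (fun _ => (1 : ℝ)) ω) ∂μ ≤
      ∫ ω, max (ξ ω) (η ω) ∂μ := by
  have hξ_mk := hξ.aemeasurable.ae_eq_mk
  have hη_mk := hη.aemeasurable.ae_eq_mk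
  have h := integral_max_mul_indicator_le hm hD hξ.aemeasurable.measurable_mk
    hη.aemeasurable.measurable_mk (hξ.congr hξ_mk) (hη.congr hη_mk)
    (by rwa [← integral_congr_ae hη_mk]) (hindep.comap_congr_ae hη_mk) (hci.congr_ae hξ_mk hη_mk)
  convert h using 1 <;>
  · refine integral_congr_ae ?_
    filter_upwards [hξ_mk, hη_mk] with ω hξω hηω
    rw [hξω, hηω]

/-- If `η` has mean zero, is independent of the sub-σ-field `m`, and `ξ` and `η` are
conditionally independent given `m`, then for `D ∈ m`,
`E[ξ ∨ (η·1_D)] ≤ E[ξ ∨ η]`. -/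
theorem stmt3 {Ω : Type*} [mΩ : MeasurableSpace Ω] [StandardBorelSpace Ω] [Nonempty Ω]
    (μ : Measure Ω) [IsProbabilityMeasure μ]
    (m : MeasurableSpace Ω) (hm : m ≤ mΩ)
    (D : Set Ω) (hD : MeasurableSet[m] D)
    (ξ η : Ω → ℝ) (hξ : Integrable ξ μ) (hη : Integrable η μ)
    (hmean : ∫ ω, η ω ∂μ = 0)
    (hindep : Indep (MeasurableSpace.comap η (inferInstance : MeasurableSpace ℝ)) m μ)
    (hci : CondIndepFun m hm ξ η μ) :
    ∫ ω, max (ξ ω) (η ω * Set.indicator D (fun _ => (1 : ℝ)) ω) ∂μ ≤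
      ∫ ω, max (ξ ω) (η ω) ∂μ :=
  stmt3_general (mΩ := mΩ) μ m hm D hD ξ η hξ hη hmean hindep hci
end

section
/- Let X ~ N(0, σ²) be a Gaussian random variable independent of an arbitrary integrable random variable Y. Then E[max(X,Y)] is a nondecreasing (in fact increasing) function of σ > 0. -/
open MeasureTheory ProbabilityTheory NNReal Set

/-!
Since `X` is symmetric, `E[max(X,Y)] = E[max(-X,Y)]`, and `max(x,y) + max(-x,y) = y + max(|x|,|y|)`;
hence `E[max(X,Y)] = (E[Y] + E[max(|X|,|Y|)]) / 2`. Passing from `σ₁` to `σ₂` amounts to replacing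
`X` by `cX` with `c = σ₂/σ₁ > 1`, which increases `max(|X|,|Y|)` pointwise, and strictly on the event
`|Y| < |X|`, which contains an event `{X > n, |Y| ≤ n}` of positive probability.
-/

lemma max_add_max_neg (x y : ℝ) : max x y + max (-x) y = y + max |x| |y| := by
  rcases abs_cases x with ⟨hx, _⟩ | ⟨hx, _⟩ <;> rcases abs_cases y with ⟨hy, _⟩ | ⟨hy, _⟩ <;>
    simp only [hx, hy, max_def] <;> split_ifs <;> linarith

lemma integral_lt_integral_of_le_of_lt_on {α : Type*} [MeasurableSpace α] {μ : Measure α}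
    {f g : α → ℝ} (hf : Integrable f μ) (hg : Integrable g μ) (hle : f ≤ g) {s : Set α}
    (hlt : ∀ x ∈ s, f x < g x) (hs : μ s ≠ 0) : ∫ x, f x ∂μ < ∫ x, g x ∂μ := by
  rw [← sub_pos, ← integral_sub hg hf]
  refine (integral_pos_iff_support_of_nonneg (fun x => sub_nonneg.2 (hle x)) (hg.sub hf)).2 ?_
  exact (pos_iff_ne_zero.2 hs).trans_le (measure_mono fun x hx => (sub_pos.2 (hlt x hx)).ne')

section

variable {μ ν : Measure ℝ}

lemma integrable_prod_of_abs_le [IsFiniteMeasure μ] [IsFiniteMeasure ν] (hμ : Integrable id μ)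
    (hν : Integrable id ν) {f : ℝ × ℝ → ℝ} (hf : Continuous f) (C : ℝ)
    (hfC : ∀ p, |f p| ≤ C * (|p.1| + |p.2|)) : Integrable f (μ.prod ν) :=
  (((hμ.abs.comp_fst ν).add (hν.abs.comp_snd μ)).const_mul C).mono' hf.aestronglyMeasurable
    (ae_of_all _ hfC)

lemma integral_max_prod_eq_of_map_neg [IsProbabilityMeasure μ] [IsFiniteMeasure ν]
    (hneg : μ.map Neg.neg = μ) (hμ : Integrable id μ) (hν : Integrable id ν) :
    ∫ p, max p.1 p.2 ∂(μ.prod ν) = (∫ y, y ∂ν + ∫ p, max |p.1| |p.2| ∂(μ.prod ν)) / 2 := by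
  have hflip : (μ.prod ν).map (Prod.map Neg.neg id) = μ.prod ν := by
    rw [← Measure.map_prod_map μ ν measurable_neg measurable_id, hneg, Measure.map_id]
  have hsymm : ∫ p, max (-p.1) p.2 ∂(μ.prod ν) = ∫ p, max p.1 p.2 ∂(μ.prod ν) := by
    conv_rhs => rw [← hflip]
    rw [integral_map (by fun_prop) (by fun_prop)]
    rfl
  have hint : ∀ f : ℝ × ℝ → ℝ, Continuous f → (∀ p, |f p| ≤ max |p.1| |p.2|) →
      Integrable f (μ.prod ν) := fun f hf hle =>
    integrable_prod_of_abs_le hμ hν hf 1 fun p => by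
      linarith [hle p, max_le_add_of_nonneg (abs_nonneg p.1) (abs_nonneg p.2)]
  have hsum := integral_add
    (hint (fun p => max p.1 p.2) (by fun_prop) fun p => abs_max_le_max_abs_abs)
    (hint (fun p => max (-p.1) p.2) (by fun_prop) fun p => by
      simpa only [abs_neg] using abs_max_le_max_abs_abs (a := -p.1) (b := p.2))
  simp only [max_add_max_neg] at hsum
  rw [integral_add (hint (fun p => p.2) (by fun_prop) fun p => le_max_right _ _)
    (hint (fun p => max |p.1| |p.2|) (by fun_prop) fun p => (abs_of_nonneg (by positivity)).le),
    hsymm] at hsum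
  have hsnd : ∫ p, p.2 ∂(μ.prod ν) = ∫ y, y ∂ν := by
    simpa using integral_fun_snd (μ := μ) (ν := ν) fun y => y
  rw [hsnd] at hsum
  linarith

lemma integral_max_abs_prod_lt_map_const_mul [IsFiniteMeasure μ] [IsFiniteMeasure ν] [NeZero ν]
    (hμ : Integrable id μ) (hν : Integrable id ν) (hμ_unbdd : ∀ a, μ (Ioi a) ≠ 0) {c : ℝ}
    (hc : 1 < c) :
    ∫ p, max |p.1| |p.2| ∂(μ.prod ν) < ∫ p, max |p.1| |p.2| ∂((μ.map (c * ·)).prod ν) := by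
  have hc₀ : 0 < c := by linarith
  have hscale : (μ.map (c * ·)).prod ν = (μ.prod ν).map (Prod.map (c * ·) id) := by
    rw [← Measure.map_prod_map μ ν (measurable_const_mul c) measurable_id, Measure.map_id]
  rw [hscale, integral_map (by fun_prop) (by fun_prop)]
  obtain ⟨n, hn⟩ : ∃ n : ℕ, ν (Metric.closedBall 0 n) ≠ 0 := by
    by_contra! h
    refine NeZero.ne ν (Measure.measure_univ_eq_zero.1 ?_)
    rw [← Metric.iUnion_closedBall_nat 0]
    exact measure_iUnion_null h
  have habs_le : ∀ x, |x| ≤ |c * x| := fun x => by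
    rw [abs_mul, abs_of_pos hc₀]
    nlinarith [abs_nonneg x]
  refine integral_lt_integral_of_le_of_lt_on (s := Ioi (n : ℝ) ×ˢ Metric.closedBall 0 n)
    (integrable_prod_of_abs_le hμ hν (by fun_prop) 1 fun p => ?_)
    (integrable_prod_of_abs_le hμ hν (by fun_prop) c fun p => ?_)
    (fun p => max_le_max (habs_le p.1) le_rfl) (fun p ⟨hx, hy⟩ => ?_) ?_
  · rw [abs_of_nonneg (by positivity), one_mul]
    exact max_le_add_of_nonneg (abs_nonneg _) (abs_nonneg _)
  · simp only [Prod.map_fst, Prod.map_snd, id, abs_mul, abs_of_pos hc₀]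
    rw [abs_of_nonneg (by positivity)]
    exact max_le (by nlinarith [abs_nonneg p.1, abs_nonneg p.2])
      (by nlinarith [abs_nonneg p.1, abs_nonneg p.2])
  · have hx₀ : 0 < p.1 := lt_of_le_of_lt n.cast_nonneg hx
    have hy' : |p.2| < |p.1| := by
      rw [Metric.mem_closedBall, Real.dist_0_eq_abs] at hy
      rw [abs_of_pos hx₀]
      exact hy.trans_lt hx
    simp only [Prod.map_fst, Prod.map_snd, id, max_eq_left hy'.le, abs_mul, abs_of_pos hc₀]
    exact lt_max_of_lt_left (lt_mul_of_one_lt_left (abs_pos.2 hx₀.ne') hc)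
  · rw [Measure.prod_prod]
    exact mul_ne_zero (hμ_unbdd n) hn

end

/-- For `X ~ N(0,σ²)` independent of an integrable `Y`, `E[max(X,Y)]` is an
increasing function of `σ > 0`. -/
theorem stmt4 (ν : Measure ℝ) [IsProbabilityMeasure ν]
    (hY : Integrable (fun y : ℝ => y) ν)
    (σ₁ σ₂ : ℝ≥0) (h1 : 0 < σ₁) (h12 : σ₁ < σ₂) :
    ∫ p : ℝ × ℝ, max p.1 p.2 ∂((gaussianReal 0 (σ₁ ^ 2)).prod ν) <
      ∫ p : ℝ × ℝ, max p.1 p.2 ∂((gaussianReal 0 (σ₂ ^ 2)).prod ν) := by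
  have hneg (v : ℝ≥0) : (gaussianReal 0 v).map Neg.neg = gaussianReal 0 v := by
    simpa using gaussianReal_map_neg (μ := 0) (v := v)
  have hσ₁ : (σ₁ : ℝ) ≠ 0 := by positivity
  have hσ₂_scale : gaussianReal 0 (σ₂ ^ 2) = (gaussianReal 0 (σ₁ ^ 2)).map ((σ₂ / σ₁ : ℝ) * ·) := by
    rw [gaussianReal_map_const_mul, mul_zero]
    congr 1
    ext
    push_cast
    field_simp
  have hunbdd (a : ℝ) : gaussianReal 0 (σ₁ ^ 2) (Ioi a) ≠ 0 := fun h => by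
    simpa using gaussianReal_absolutelyContinuous' 0 (pow_ne_zero 2 h1.ne') h
  rw [integral_max_prod_eq_of_map_neg (hneg _) IsGaussian.integrable_id hY,
    integral_max_prod_eq_of_map_neg (hneg _) IsGaussian.integrable_id hY, hσ₂_scale]
  gcongr
  exact integral_max_abs_prod_lt_map_const_mul IsGaussian.integrable_id hY hunbdd
    ((one_lt_div (by positivity)).2 (by exact_mod_cast h12))
end

section
/- For a fixed real number y with |y| ≤ M such that y appears as threshold, the minimum of ∫_y^M F(x) dx over all distribution functions F of mean-zero random variables supported on [−M, M] equals (M−y)/2, attained by the distribution putting mass 1/2 at each of ±M. -/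
/-!
For `X` with values in `[a, b]`, Fubini (the layer-cake formula applied to `b - X`) gives
`∫_a^b F = b - E[X]`, so `∫_{-M}^M F = M` when `E[X] = 0`. For a monotone `F` the average over
the upper piece `[y, M]` is at least the average over all of `[-M, M]`, i.e.
`∫_y^M F ≥ (M - y)/2`.
The symmetric two-point law at `±M` has `F = 1/2` on `[-M, M)`, so it attains the bound.
-/

open MeasureTheory ENNReal ProbabilityTheory Set

lemma integrable_id_of_ae_mem_Icc {μ : Measure ℝ} [IsFiniteMeasure μ] {a b : ℝ}
    (h : ∀ᵐ x ∂μ, x ∈ Icc a b) : Integrable (fun x => x) μ :=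
  .of_bound measurable_id.aestronglyMeasurable (max |a| |b|)
    (h.mono fun _ hx => abs_le_max_abs_abs hx.1 hx.2)

theorem integral_cdf_eq_sub_integral {μ : Measure ℝ} [IsProbabilityMeasure μ] {a b : ℝ}
    (hab : a ≤ b) (h : ∀ᵐ x ∂μ, x ∈ Icc a b) :
    ∫ x in a..b, cdf μ x = b - ∫ x, x ∂μ := by
  have hid := integrable_id_of_ae_mem_Icc h
  have hlayer := Integrable.integral_eq_integral_Ioc_meas_le (f := fun x => b - x) (M := b - a)
    ((integrable_const b).sub hid)
    (h.mono fun x hx => sub_nonneg.2 hx.2) (h.mono fun x hx => sub_le_sub_left hx.1 b)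
  rw [integral_sub (integrable_const b) hid, integral_const, probReal_univ, smul_eq_mul,
    one_mul] at hlayer
  have hset : ∀ t, {x | t ≤ b - x} = Iic (b - t) :=
    fun _ => Set.ext fun _ => le_sub_comm (b := b)
  rw [hlayer, ← intervalIntegral.integral_of_le (sub_nonneg.2 hab)]
  simp only [hset, ← cdf_eq_real]
  rw [intervalIntegral.integral_comp_sub_left, sub_zero, _root_.sub_sub_cancel]

theorem MonotoneOn.sub_mul_intervalIntegral_le {f : ℝ → ℝ} {a y b : ℝ}
    (hf : MonotoneOn f (Icc a b)) (hy : y ∈ Icc a b) :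
    (b - y) * ∫ x in a..b, f x ≤ (b - a) * ∫ x in y..b, f x := by
  have hint : ∀ {c d}, c ∈ Icc a b → d ∈ Icc a b → c ≤ d →
      IntervalIntegrable f volume c d :=
    fun hc hd hcd =>
      (hf.mono (by rw [uIcc_of_le hcd]; exact Icc_subset_Icc hc.1 hd.2)).intervalIntegrable
  have ha : a ∈ Icc a b := left_mem_Icc.2 (hy.1.trans hy.2)
  have hb : b ∈ Icc a b := right_mem_Icc.2 (hy.1.trans hy.2)
  have hlow : ∫ x in a..y, f x ≤ (y - a) * f y := by
    simpa [mul_comm] using intervalIntegral.integral_mono_on hy.1 (hint ha hy hy.1)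
      intervalIntegrable_const fun x hx => hf ⟨hx.1, hx.2.trans hy.2⟩ hy hx.2
  have hup : (b - y) * f y ≤ ∫ x in y..b, f x := by
    simpa [mul_comm] using intervalIntegral.integral_mono_on hy.2 intervalIntegrable_const
      (hint hy hb hy.2) fun x hx => hf hy ⟨hy.1.trans hx.1, hx.2⟩ hx.1
  rw [← intervalIntegral.integral_add_adjacent_intervals (hint ha hy hy.1) (hint hy hb hy.2)]
  linarith [mul_le_mul_of_nonneg_left hlow (sub_nonneg.2 hy.2),
    mul_le_mul_of_nonneg_left hup (sub_nonneg.2 hy.1)]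

noncomputable def symmetricTwoPoint (M : ℝ) : Measure ℝ :=
  (2 : ℝ≥0∞)⁻¹ • Measure.dirac (-M) + (2 : ℝ≥0∞)⁻¹ • Measure.dirac M

namespace symmetricTwoPoint

variable {M : ℝ}

instance (M : ℝ) : IsProbabilityMeasure (symmetricTwoPoint M) :=
  ⟨by simp [symmetricTwoPoint, ENNReal.inv_two_add_inv_two]⟩

lemma apply_compl_Icc (hM : 0 ≤ M) : symmetricTwoPoint M (Icc (-M) M)ᶜ = 0 := by
  simp [symmetricTwoPoint, hM]

lemma integral_id (M : ℝ) : ∫ x, x ∂symmetricTwoPoint M = 0 := by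
  rw [symmetricTwoPoint, integral_add_measure, integral_smul_measure, integral_smul_measure,
    integral_dirac, integral_dirac]
  · ring
  all_goals exact (integrable_dirac (by simp)).smul_measure (by simp)

lemma apply_Iic_of_mem_Ico {x : ℝ} (hx : x ∈ Ico (-M) M) :
    symmetricTwoPoint M (Iic x) = 2⁻¹ := by
  simp [symmetricTwoPoint, hx.1, hx.2]

lemma intervalIntegral_apply_Iic {y : ℝ} (hy : y ∈ Icc (-M) M) :
    ∫ x in y..M, (symmetricTwoPoint M (Iic x)).toReal = (M - y) / 2 := by
  have hne : ∀ᵐ x : ℝ, x ≠ M := by simp [ae_iff, measure_singleton]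
  rw [intervalIntegral.integral_congr_ae (g := fun _ => (2 : ℝ)⁻¹),
    intervalIntegral.integral_const, smul_eq_mul, div_eq_mul_inv]
  filter_upwards [hne] with x hxM hx
  rw [uIoc_of_le hy.2] at hx
  rw [apply_Iic_of_mem_Ico ⟨hy.1.trans hx.1.le, hx.2.lt_of_ne hxM⟩, toReal_inv, toReal_ofNat]

end symmetricTwoPoint

/-- The minimum of `∫_y^M F(x) dx` over CDFs `F` of mean-zero random variables
supported on `[-M,M]` equals `(M-y)/2`, attained by the two-point distribution
putting mass `1/2` at each of `±M`. -/
theorem stmt5 (M y : ℝ) (hM : 0 < M) (hy : y ∈ Set.Icc (-M) M) :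
    IsLeast
      { I : ℝ | ∃ μ : Measure ℝ, IsProbabilityMeasure μ ∧
          μ (Set.Icc (-M) M)ᶜ = 0 ∧ (∫ x, x ∂μ) = 0 ∧
          I = ∫ x in y..M, (μ (Set.Iic x)).toReal }
      ((M - y) / 2) ∧
    (∫ x in y..M,
        (((2 : ℝ≥0∞)⁻¹ • Measure.dirac (-M) + (2 : ℝ≥0∞)⁻¹ • Measure.dirac M)
          (Set.Iic x)).toReal) = (M - y) / 2 := by
  have hval := symmetricTwoPoint.intervalIntegral_apply_Iic hy
  refine ⟨⟨⟨symmetricTwoPoint M, inferInstance, symmetricTwoPoint.apply_compl_Icc hM.le,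
    symmetricTwoPoint.integral_id M, hval.symm⟩, ?_⟩, hval⟩
  rintro _ ⟨μ, _, hsupp, hmean, rfl⟩
  have hbound := ((monotone_cdf μ).monotoneOn (Icc (-M) M)).sub_mul_intervalIntegral_le hy
  rw [integral_cdf_eq_sub_integral (hy.1.trans hy.2) (mem_ae_iff.2 hsupp), hmean] at hbound
  simp only [cdf_eq_real, measureReal_def] at hbound
  rw [div_le_iff₀ two_pos]
  nlinarith
end

section
/- Define f(u) = u(u−1)·p̄/(1−ub) for 1 ≤ u < 1/b, where 0 < p̄ ≤ b < 1. Let g(x) = sup_{1 ≤ u < 1/b} (xu − f(u)). Then for x ≥ p̄/(1−b), g(x) ≥ (1/b²)(√((1−b)p̄) − √(bx+p̄))², and consequently the (generalized) inverse satisfies g⁻¹(x) ≤ bx + 2√((1−b)p̄·x) for all x ≥ 0. -/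
/-!
For `x ≥ p̄/(1-b)` write `A = √((1-b)p̄)` and `B = √(bx+p̄)`; the maximiser is the `u` with
`1 - u b = A / B`, i.e. `u = (B - A)/(bB)`, which lies in `[1, 1/b)` exactly because `A ≤ (1-b)B`, and its value is
`(A - B)²/b²`. For the inverse bound put `y = bx + 2A√x`: then `√(by+p̄) ≥ b√x + A` since
`A² ≤ p̄`, so the first bound gives `g y ≥ x`. If instead `y < p̄/(1-b)`, then `x ≤ y`, and
`u = 1` already gives `y ≤ g y`.
-/

open Real Set

noncomputable def conjugateObjective (b p x u : ℝ) : ℝ := x * u - u * (u - 1) * p / (1 - u * b)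

section
variable {b p x : ℝ}

lemma conjugateObjective_le_div (hb : 0 < b) (hp : 0 ≤ p) (hx : 0 ≤ x) {u : ℝ}
    (hu : u ∈ Ico 1 (1 / b)) : conjugateObjective b p x u ≤ x / b := by
  obtain ⟨hu1, hub⟩ := hu
  rw [lt_div_iff₀ hb, ← mul_comm b] at hub
  have hf : 0 ≤ u * (u - 1) * p / (1 - u * b) := by
    have : 0 ≤ u - 1 := by linarith
    exact div_nonneg (by positivity) (by linarith)
  have hxu : x * u ≤ x / b := by
    rw [le_div_iff₀ hb]
    nlinarith
  unfold conjugateObjective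
  linarith

lemma bddAbove_conjugateObjective_image (hb : 0 < b) (hp : 0 ≤ p) (hx : 0 ≤ x) :
    BddAbove (conjugateObjective b p x '' Ico 1 (1 / b)) :=
  ⟨x / b, by rintro _ ⟨u, hu, rfl⟩; exact conjugateObjective_le_div hb hp hx hu⟩

lemma le_sSup_conjugateObjective (hb : 0 < b) (hb1 : b < 1) (hp : 0 ≤ p) (hx : 0 ≤ x) :
    x ≤ sSup (conjugateObjective b p x '' Ico 1 (1 / b)) :=
  le_csSup_of_le (bddAbove_conjugateObjective_image hb hp hx)
    ⟨1, ⟨le_rfl, one_lt_one_div hb hb1⟩, rfl⟩ (by simp [conjugateObjective])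

lemma conjugateObjective_sub_div_mul {A B : ℝ} (hb : b ≠ 0) (hb1 : b ≠ 1) (hB : B ≠ 0)
    (hA2 : A ^ 2 = (1 - b) * p) (hB2 : B ^ 2 = b * x + p) :
    conjugateObjective b p x ((B - A) / (b * B)) = 1 / b ^ 2 * (A - B) ^ 2 := by
  have h1b : 1 - b ≠ 0 := sub_ne_zero.mpr hb1.symm
  have h1ub : 1 - (B - A) / (b * B) * b = A / B := by field_simp; ring
  have hx : x = (B ^ 2 - p) / b := by rw [eq_div_iff hb]; linarith
  have hp : p = A ^ 2 / (1 - b) := by rw [eq_div_iff h1b]; linarith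
  unfold conjugateObjective
  rw [h1ub, hx, hp]
  field_simp
  ring

lemma sub_div_mul_mem_Ico {A B : ℝ} (hb : 0 < b) (hA : 0 < A) (hB : 0 < B)
    (hAB : A ≤ (1 - b) * B) : (B - A) / (b * B) ∈ Ico 1 (1 / b) := by
  constructor
  · rw [le_div_iff₀ (by positivity)]; linarith
  · rw [div_lt_div_iff₀ (by positivity) hb]; nlinarith

lemma sqrt_le_one_sub_mul_sqrt (hb : 0 < b) (hb1 : b < 1) (hx : p / (1 - b) ≤ x) :
    √((1 - b) * p) ≤ (1 - b) * √(b * x + p) := by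
  have h1b : 0 < 1 - b := by linarith
  rw [div_le_iff₀ h1b] at hx
  calc √((1 - b) * p) ≤ √((1 - b) ^ 2 * (b * x + p)) :=
        sqrt_le_sqrt (by nlinarith [mul_nonneg (mul_nonneg h1b.le hb.le) (sub_nonneg.mpr hx)])
    _ = (1 - b) * √(b * x + p) := by rw [sqrt_mul (sq_nonneg _), sqrt_sq h1b.le]

theorem sq_sub_sqrt_le_sSup_conjugateObjective (hb : 0 < b) (hb1 : b < 1) (hp : 0 < p)
    (hx : p / (1 - b) ≤ x) :
    1 / b ^ 2 * (√((1 - b) * p) - √(b * x + p)) ^ 2 ≤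
      sSup (conjugateObjective b p x '' Ico 1 (1 / b)) := by
  have h1b : 0 < 1 - b := by linarith
  have hx0 : 0 ≤ x := (div_pos hp h1b).le.trans hx
  have hA : 0 < √((1 - b) * p) := sqrt_pos.mpr (by positivity)
  have hB : 0 < √(b * x + p) := sqrt_pos.mpr (by positivity)
  rw [← conjugateObjective_sub_div_mul hb.ne' hb1.ne hB.ne' (sq_sqrt (by positivity))
    (sq_sqrt (by positivity))]
  exact le_csSup (bddAbove_conjugateObjective_image hb hp.le hx0)
    ⟨_, sub_div_mul_mem_Ico hb hA hB (sqrt_le_one_sub_mul_sqrt hb hb1 hx), rfl⟩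

lemma sq_le_sq_sub_sqrt {A s : ℝ} (hb : 0 < b) (hAp : A ^ 2 ≤ p) (hs : 0 ≤ s) :
    s ^ 2 ≤ 1 / b ^ 2 * (A - √(b * (b * s ^ 2 + 2 * (A * s)) + p)) ^ 2 := by
  have hB : b * s + A ≤ √(b * (b * s ^ 2 + 2 * (A * s)) + p) :=
    le_sqrt_of_sq_le (by nlinarith)
  rw [div_mul_eq_mul_div, one_mul, le_div_iff₀ (by positivity)]
  nlinarith [mul_nonneg hb.le hs]

lemma sq_le_of_lt_div_one_sub {A s : ℝ} (hb1 : b < 1) (hb : 0 ≤ b) (hA : 0 ≤ A)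
    (hA2 : A ^ 2 = (1 - b) * p) (hs : 0 ≤ s) (hy : b * s ^ 2 + 2 * (A * s) < p / (1 - b)) :
    s ^ 2 ≤ b * s ^ 2 + 2 * (A * s) := by
  have h1b : 0 < 1 - b := by linarith
  rw [lt_div_iff₀ h1b] at hy
  by_contra! h
  have hA2s : 2 * A < (1 - b) * s := by nlinarith
  have hcross : 4 * ((1 - b) * p) ≤ 2 * A * ((1 - b) * s) := by
    nlinarith [mul_le_mul_of_nonneg_left hA2s.le (by positivity : (0:ℝ) ≤ 2 * A)]
  have hsq : 4 * p ≤ (1 - b) * s ^ 2 := by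
    have := mul_le_mul hA2s.le hA2s.le (by positivity) (by positivity)
    nlinarith
  nlinarith [mul_le_mul_of_nonneg_left hsq hb]

end

/-- For `f(u) = u(u-1)·p̄/(1-ub)` on `[1, 1/b)` and
`g(x) = sup_{1 ≤ u < 1/b} (xu - f(u))`:
for `x ≥ p̄/(1-b)` one has `g(x) ≥ (1/b²)(√((1-b)p̄) - √(bx+p̄))²`, and
consequently `g⁻¹(x) ≤ bx + 2√((1-b)p̄x)` for all `x ≥ 0` (expressed as
`g(bx + 2√((1-b)p̄x)) ≥ x`). -/
theorem stmt8 (b p : ℝ) (hp : 0 < p) (hpb : p ≤ b) (hb : b < 1)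
    (g : ℝ → ℝ)
    (hg : ∀ x, g x =
      sSup ((fun u => x * u - u * (u - 1) * p / (1 - u * b)) '' Set.Ico 1 (1 / b))) :
    (∀ x : ℝ, p / (1 - b) ≤ x →
      (1 / b ^ 2) * (Real.sqrt ((1 - b) * p) - Real.sqrt (b * x + p)) ^ 2 ≤ g x) ∧
    (∀ x : ℝ, 0 ≤ x → x ≤ g (b * x + 2 * Real.sqrt ((1 - b) * p * x))) := by
  have hb0 : 0 < b := hp.trans_le hpb
  have hp1b : 0 ≤ (1 - b) * p := by nlinarith
  have lower (x : ℝ) (hx : p / (1 - b) ≤ x) :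
      1 / b ^ 2 * (√((1 - b) * p) - √(b * x + p)) ^ 2 ≤ g x := by
    rw [hg x]
    exact sq_sub_sqrt_le_sSup_conjugateObjective hb0 hb hp hx
  refine ⟨lower, fun x hx => ?_⟩
  obtain ⟨s, hs, rfl⟩ : ∃ s, 0 ≤ s ∧ x = s ^ 2 := ⟨√x, sqrt_nonneg x, (sq_sqrt hx).symm⟩
  rw [sqrt_mul hp1b, sqrt_sq hs]
  set A := √((1 - b) * p)
  have hA2 : A ^ 2 = (1 - b) * p := sq_sqrt hp1b
  by_cases hy : p / (1 - b) ≤ b * s ^ 2 + 2 * (A * s)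
  · exact (sq_le_sq_sub_sqrt hb0 (by nlinarith) hs).trans (lower _ hy)
  · rw [hg]
    exact (sq_le_of_lt_div_one_sub hb hb0.le (sqrt_nonneg _) hA2 hs (not_le.mp hy)).trans
      (le_sSup_conjugateObjective hb0 hb hp.le (by positivity))
end

section
/- Define g(x) = sup_{u ≥ 0} { xu − p̄·u(u+1)/(1+u·p̄) } for 0 ≤ x ≤ 1, where 0 < p̄ < 1. Then g(x) = (1/p̄)(√(1−x) − √(1−p̄))² for p̄ ≤ x ≤ 1, and g(x) = 0 for 0 ≤ x ≤ p̄. Consequently g⁻¹(x) ≤ p̄ − p̄x + 2√(p̄(1−p̄)x) for 0 ≤ x ≤ (1−p̄)/p̄. -/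
/-!
`g` is the convex conjugate of `φ u = p u (u + 1) / (1 + u p)` on `u ≥ 0`. Writing
`a = √(1 - x)`, `b = √(1 - p)`, completing the square gives
`(a - b)² / p - (x u - φ u) = (a (1 + u p) - b)² / (p (1 + u p))`,
so `(a - b)² / p` bounds `g x` for `x ≤ 1`, with equality where `1 + u p = b / a`; that point is
admissible exactly when `x ≥ p`, and for `x = 1` the bound is only approached as `u → ∞`.
For `x ≤ p` one has `x u ≤ φ u` directly. Finally `y = p - p x + 2 √(p (1 - p) x)` satisfies
`√(1 - y) = √(1 - p) - √(p x)`, whence `g y = x`.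
-/

open Real Set Filter Topology

noncomputable def legendreTerm (p x u : ℝ) : ℝ := x * u - p * u * (u + 1) / (1 + u * p)

section

variable {p x y a b : ℝ}

lemma legendreTerm_gap (u : ℝ) (ha : a ^ 2 = 1 - x) (hb : b ^ 2 = 1 - p) (hp : p ≠ 0)
    (hu : 1 + u * p ≠ 0) :
    1 / p * (a - b) ^ 2 - legendreTerm p x u = (a * (1 + u * p) - b) ^ 2 / (p * (1 + u * p)) := by
  rw [mul_comm u] at hu ⊢
  rw [eq_div_iff (mul_ne_zero hp hu), legendreTerm, mul_comm u]
  field_simp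
  linear_combination -(p * u) * (1 + p * u) * ha + p * u * hb

lemma legendreTerm_le (hp : 0 < p) (hp1 : p ≤ 1) (hx : x ≤ 1) {u : ℝ} (hu : 0 ≤ u) :
    legendreTerm p x u ≤ 1 / p * (√(1 - x) - √(1 - p)) ^ 2 := by
  have hup : 0 < 1 + u * p := by positivity
  have hgap := legendreTerm_gap (a := √(1 - x)) (b := √(1 - p)) u (sq_sqrt (by linarith))
    (sq_sqrt (by linarith)) hp.ne' hup.ne'
  have hgap_nonneg : 0 ≤ (√(1 - x) * (1 + u * p) - √(1 - p)) ^ 2 / (p * (1 + u * p)) := by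
    positivity
  linarith

lemma exists_legendreTerm_eq (hp : 0 < p) (hpx : p ≤ x) (hx : x < 1) :
    ∃ u, 0 ≤ u ∧ legendreTerm p x u = 1 / p * (√(1 - x) - √(1 - p)) ^ 2 := by
  set a := √(1 - x)
  set b := √(1 - p)
  have ha : 0 < a := sqrt_pos.2 (by linarith)
  have hab : a ≤ b := sqrt_le_sqrt (by linarith)
  refine ⟨(b - a) / (a * p), div_nonneg (sub_nonneg.2 hab) (by positivity), ?_⟩
  have hup : 1 + (b - a) / (a * p) * p = b / a := by field_simp; ring
  have hgap := legendreTerm_gap (a := a) (b := b) ((b - a) / (a * p)) (sq_sqrt (by linarith))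
    (sq_sqrt (by linarith)) hp.ne' (by rw [hup]; exact (div_pos (ha.trans_le hab) ha).ne')
  rw [hup, mul_div_cancel₀ _ ha.ne', sub_self, zero_pow two_ne_zero, zero_div,
    sub_eq_zero] at hgap
  exact hgap.symm

lemma tendsto_legendreTerm_one (hp : 0 < p) :
    Tendsto (legendreTerm p 1) atTop (𝓝 ((1 - p) / p)) := by
  have hinv : Tendsto (fun u : ℝ => (1 + u * p)⁻¹) atTop (𝓝 0) :=
    tendsto_inv_atTop_zero.comp (tendsto_atTop_add_const_left _ 1 (tendsto_id.atTop_mul_const hp))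
  have hlim := (hinv.const_mul ((1 - p) / p)).const_sub ((1 - p) / p)
  rw [mul_zero, sub_zero] at hlim
  refine hlim.congr' ?_
  filter_upwards [eventually_ge_atTop 0] with u hu
  have hup : 0 < 1 + u * p := by positivity
  unfold legendreTerm
  field_simp
  ring

lemma isLUB_legendreTerm (hp : 0 < p) (hpx : p ≤ x) (hx : x ≤ 1) :
    IsLUB (legendreTerm p x '' Ici 0) (1 / p * (√(1 - x) - √(1 - p)) ^ 2) := by
  refine ⟨forall_mem_image.2 fun u hu => legendreTerm_le hp (hpx.trans hx) hx hu,
    fun w hw => ?_⟩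
  rcases hx.lt_or_eq with hx | rfl
  · obtain ⟨u, hu, heq⟩ := exists_legendreTerm_eq hp hpx hx
    exact heq ▸ hw ⟨u, hu, rfl⟩
  · have hval : 1 / p * (√(1 - 1) - √(1 - p)) ^ 2 = (1 - p) / p := by
      rw [sub_self, sqrt_zero, zero_sub, neg_sq, sq_sqrt (by linarith)]
      ring
    rw [hval]
    refine le_of_tendsto (tendsto_legendreTerm_one hp) ?_
    filter_upwards [eventually_ge_atTop 0] with u hu using hw ⟨u, hu, rfl⟩

lemma legendreTerm_nonpos (hp : 0 < p) (hp1 : p ≤ 1) (hxp : x ≤ p) {u : ℝ} (hu : 0 ≤ u) :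
    legendreTerm p x u ≤ 0 := by
  have hup : 0 < 1 + u * p := by positivity
  rw [legendreTerm, sub_nonpos, le_div_iff₀ hup]
  nlinarith [mul_nonneg hu (sub_nonneg.2 hxp), mul_nonneg (mul_nonneg hu hu) hp.le]

lemma isGreatest_legendreTerm_zero (hp : 0 < p) (hp1 : p ≤ 1) (hxp : x ≤ p) :
    IsGreatest (legendreTerm p x '' Ici 0) 0 :=
  ⟨⟨0, self_mem_Ici, by simp [legendreTerm]⟩,
    forall_mem_image.2 fun _ hu => legendreTerm_nonpos hp hp1 hxp hu⟩

lemma closedForm_at_inverseBound (hp : 0 < p) (hx : 0 ≤ x) (hpx : p * x ≤ 1 - p)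
    (hy : y = p - p * x + 2 * √(p * (1 - p) * x)) :
    p ≤ y ∧ y ≤ 1 ∧ 1 / p * (√(1 - y) - √(1 - p)) ^ 2 = x := by
  set s := √(p * x)
  set b := √(1 - p)
  have hs : s ^ 2 = p * x := sq_sqrt (by positivity)
  have hb : b ^ 2 = 1 - p := sq_sqrt (by nlinarith)
  have hsb : s ≤ b := sqrt_le_sqrt hpx
  have hy' : y = p + s * (2 * b - s) := by
    rw [hy, show p * (1 - p) * x = (1 - p) * (p * x) by ring, sqrt_mul (by nlinarith)]
    linear_combination hs
  have h1y : 1 - y = (b - s) ^ 2 := by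
    rw [hy']
    linear_combination -hb
  refine ⟨?_, ?_, ?_⟩
  · nlinarith [sqrt_nonneg (p * x)]
  · nlinarith [sq_nonneg (b - s)]
  · rw [h1y, sqrt_sq (sub_nonneg.2 hsb), sub_sub_cancel_left, neg_sq, hs]
    field_simp

end

/-- For `g(x) = sup_{u ≥ 0} (xu - p̄u(u+1)/(1+up̄))`:
`g(x) = (1/p̄)(√(1-x) - √(1-p̄))²` for `p̄ ≤ x ≤ 1`, `g(x) = 0` for `0 ≤ x ≤ p̄`,
and `g⁻¹(x) ≤ p̄ - p̄x + 2√(p̄(1-p̄)x)` for `0 ≤ x ≤ (1-p̄)/p̄` (expressed as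
`g(p̄ - p̄x + 2√(p̄(1-p̄)x)) ≥ x`). -/
theorem stmt9 (p : ℝ) (hp : 0 < p) (hp1 : p < 1)
    (g : ℝ → ℝ)
    (hg : ∀ x, g x =
      sSup ((fun u => x * u - p * u * (u + 1) / (1 + u * p)) '' Set.Ici 0)) :
    (∀ x : ℝ, p ≤ x → x ≤ 1 →
      g x = (1 / p) * (Real.sqrt (1 - x) - Real.sqrt (1 - p)) ^ 2) ∧
    (∀ x : ℝ, 0 ≤ x → x ≤ p → g x = 0) ∧
    (∀ x : ℝ, 0 ≤ x → x ≤ (1 - p) / p →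
      x ≤ g (p - p * x + 2 * Real.sqrt (p * (1 - p) * x))) := by
  have closedForm : ∀ x, p ≤ x → x ≤ 1 → g x = 1 / p * (√(1 - x) - √(1 - p)) ^ 2 :=
    fun x hpx hx => (hg x).trans ((isLUB_legendreTerm hp hpx hx).csSup_eq (nonempty_Ici.image _))
  refine ⟨closedForm, fun x _ hxp => ?_, fun x hx hxp => ?_⟩
  · exact (hg x).trans (isGreatest_legendreTerm_zero hp hp1.le hxp).csSup_eq
  · obtain ⟨hpy, hy1, hval⟩ :=
      closedForm_at_inverseBound hp hx (by rwa [le_div_iff₀ hp, mul_comm] at hxp) rfl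
    rw [closedForm _ hpy hy1, hval]
end

section
/- Let m be a probability measure on [c,∞) with c > 0, σ² := ∫ ξ^{-2} m(dξ), and suppose for each small α > 0 there exists a = a(α) ∈ (0,c) solving α = a² ∫ (ξ−a)^{-2} m(dξ). Then a(α) ≤ √α / σ, and moreover α/a(α)² − σ² = O(√α) as α ↓ 0, hence √α/a(α) → σ. -/
/-!
Since `ξ ≥ c > a`, the kernel `(ξ - a)⁻²` dominates `ξ⁻²`, and exceeds it by at most
`2a / (c (c - a)²)`. Dividing `α = a² ∫ (ξ - a)⁻² dm` by `a²` therefore gives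
`σ² ≤ α / a² ≤ σ² + 2a / (c (c - a)²)`. The lower bound says `a ≤ √α / σ`, so
`a ≤ c / 2` once `α ≤ σ² c² / 4`, and then the error term is at most `8a / c³ ≤ 8√α / (c³ σ)`.
-/

open MeasureTheory Filter

section Pointwise

variable {b c ξ : ℝ}

lemma inv_sq_le_inv_sub_sq (hb : 0 ≤ b) (hbξ : b < ξ) : (ξ ^ 2)⁻¹ ≤ ((ξ - b) ^ 2)⁻¹ := by
  apply inv_anti₀ (by nlinarith)
  nlinarith

lemma inv_sub_sq_sub_inv_sq_le (hb : 0 ≤ b) (hbc : b < c) (hcξ : c ≤ ξ) :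
    ((ξ - b) ^ 2)⁻¹ - (ξ ^ 2)⁻¹ ≤ 2 * b / (c * (c - b) ^ 2) := by
  have hc : 0 < c := hb.trans_lt hbc
  have hξ : 0 < ξ := hc.trans_le hcξ
  have hξb : 0 < ξ - b := by linarith
  have hcb : 0 < c - b := by linarith
  have hsq : (c - b) ^ 2 ≤ (ξ - b) ^ 2 := by gcongr
  rw [inv_sub_inv (by positivity) (by positivity), div_le_div_iff₀ (by positivity) (by positivity)]
  have hnum : ξ ^ 2 - (ξ - b) ^ 2 ≤ 2 * b * ξ := by nlinarith
  have hden : c * (c - b) ^ 2 * ξ ≤ (ξ - b) ^ 2 * ξ ^ 2 := by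
    have : c * ξ ≤ ξ ^ 2 := by nlinarith
    nlinarith [mul_le_mul hsq this (by positivity) (by positivity)]
  nlinarith [mul_le_mul_of_nonneg_left hden (by positivity : (0 : ℝ) ≤ 2 * b),
    mul_le_mul_of_nonneg_right hnum (by positivity : (0 : ℝ) ≤ c * (c - b) ^ 2)]

end Pointwise

section Integral

variable {m : Measure ℝ} {b c : ℝ}

lemma MeasureTheory.Integrable.inv_sq_of_inv_sub_sq (hae : ∀ᵐ ξ ∂m, c ≤ ξ) (hb : 0 ≤ b)
    (hbc : b < c) (hint : Integrable (fun ξ => ((ξ - b) ^ 2)⁻¹) m) :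
    Integrable (fun ξ => (ξ ^ 2)⁻¹) m := by
  refine hint.mono' (measurable_id.pow_const 2).inv.aestronglyMeasurable ?_
  filter_upwards [hae] with ξ hξ
  rw [Real.norm_of_nonneg (by positivity)]
  exact inv_sq_le_inv_sub_sq hb (hbc.trans_le hξ)

lemma integral_inv_sq_le_integral_inv_sub_sq (hae : ∀ᵐ ξ ∂m, c ≤ ξ) (hb : 0 ≤ b) (hbc : b < c)
    (hint : Integrable (fun ξ => ((ξ - b) ^ 2)⁻¹) m) :
    ∫ ξ, (ξ ^ 2)⁻¹ ∂m ≤ ∫ ξ, ((ξ - b) ^ 2)⁻¹ ∂m := by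
  refine integral_mono_ae (hint.inv_sq_of_inv_sub_sq hae hb hbc) hint ?_
  filter_upwards [hae] with ξ hξ
  exact inv_sq_le_inv_sub_sq hb (hbc.trans_le hξ)

lemma integral_inv_sub_sq_le [IsFiniteMeasure m] (hae : ∀ᵐ ξ ∂m, c ≤ ξ) (hb : 0 ≤ b)
    (hbc : b < c) (hint : Integrable (fun ξ => ((ξ - b) ^ 2)⁻¹) m) :
    ∫ ξ, ((ξ - b) ^ 2)⁻¹ ∂m ≤
      ∫ ξ, (ξ ^ 2)⁻¹ ∂m + m.real Set.univ * (2 * b / (c * (c - b) ^ 2)) := by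
  have hint' := hint.inv_sq_of_inv_sub_sq hae hb hbc
  rw [← smul_eq_mul, ← integral_const, ← integral_add hint' (integrable_const _)]
  refine integral_mono_ae hint (hint'.add (integrable_const _)) ?_
  filter_upwards [hae] with ξ hξ
  linarith [inv_sub_sq_sub_inv_sq_le hb hbc hξ]

end Integral

section Asymptotics

variable {a c α σ : ℝ}

lemma le_sqrt_div_sqrt_of_le_div_sq (ha : 0 < a) (hσ : 0 < σ) (h : σ ≤ α / a ^ 2) :
    a ≤ √α / √σ := by
  rw [le_div_iff₀ (Real.sqrt_pos.2 hσ)]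
  calc a * √σ = √(a ^ 2 * σ) := by rw [Real.sqrt_mul (sq_nonneg a), Real.sqrt_sq ha.le]
    _ ≤ √α := Real.sqrt_le_sqrt (by rwa [le_div_iff₀ (by positivity), mul_comm] at h)

lemma le_half_of_le_sqrt_div_sqrt (hc : 0 < c) (hσ : 0 < σ) (hα : α ≤ σ * c ^ 2 / 4)
    (haα : a ≤ √α / √σ) : a ≤ c / 2 := by
  have hsqrt : √(σ * c ^ 2 / 4) = √σ * (c / 2) := by
    rw [show σ * c ^ 2 / 4 = σ * (c / 2) ^ 2 by ring, Real.sqrt_mul hσ.le,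
      Real.sqrt_sq (by positivity)]
  calc a ≤ √α / √σ := haα
    _ ≤ √(σ * c ^ 2 / 4) / √σ := by gcongr
    _ = c / 2 := by rw [hsqrt]; field_simp [(Real.sqrt_pos.2 hσ).ne']

lemma two_mul_div_mul_sub_sq_le (hc : 0 < c) (ha : 0 ≤ a) (hac : a ≤ c / 2) :
    2 * a / (c * (c - a) ^ 2) ≤ 8 * a / c ^ 3 := by
  have hsq : (c / 2) ^ 2 ≤ (c - a) ^ 2 := by gcongr; linarith
  have hca : 0 < c - a := by linarith
  rw [div_le_div_iff₀ (by positivity) (by positivity)]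
  nlinarith [mul_le_mul_of_nonneg_left hsq (by positivity : (0 : ℝ) ≤ 8 * a * c)]

lemma div_sq_sub_le_mul_sqrt (hc : 0 < c) (ha : 0 < a) (hσ : 0 < σ)
    (hα : α ≤ σ * c ^ 2 / 4) (hlow : σ ≤ α / a ^ 2)
    (hup : α / a ^ 2 ≤ σ + 2 * a / (c * (c - a) ^ 2)) :
    α / a ^ 2 - σ ≤ 8 / (c ^ 3 * √σ) * √α := by
  have haα := le_sqrt_div_sqrt_of_le_div_sq ha hσ hlow
  have hac := le_half_of_le_sqrt_div_sqrt hc hσ hα haα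
  calc α / a ^ 2 - σ ≤ 2 * a / (c * (c - a) ^ 2) := by linarith
    _ ≤ 8 * a / c ^ 3 := two_mul_div_mul_sub_sq_le hc ha.le hac
    _ ≤ 8 * (√α / √σ) / c ^ 3 := by gcongr
    _ = 8 / (c ^ 3 * √σ) * √α := by ring

lemma tendsto_of_sub_le_mul_sqrt {f : ℝ → ℝ} {L C : ℝ}
    (h : ∀ᶠ α in nhdsWithin 0 (Set.Ioi 0), 0 ≤ f α - L ∧ f α - L ≤ C * √α) :
    Tendsto f (nhdsWithin 0 (Set.Ioi 0)) (nhds L) := by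
  have hsqrt : Tendsto (fun α => C * √α) (nhdsWithin 0 (Set.Ioi 0)) (nhds 0) := by
    simpa using ((Real.continuous_sqrt.tendsto 0).const_mul C).mono_left nhdsWithin_le_nhds
  have hsub : Tendsto (fun α => f α - L) (nhdsWithin 0 (Set.Ioi 0)) (nhds 0) :=
    tendsto_of_tendsto_of_tendsto_of_le_of_le' tendsto_const_nhds hsqrt
      (h.mono fun _ hα => hα.1) (h.mono fun _ hα => hα.2)
  simpa using hsub.add_const L

end Asymptotics

/-- If `a(α) ∈ (0,c)` solves `α = a² ∫ (ξ-a)⁻² m(dξ)` for a probability measure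
`m` on `[c,∞)` and `σ² = ∫ ξ⁻² m(dξ)`, then `a(α) ≤ √α/σ`,
`α/a(α)² - σ² = O(√α)` as `α ↓ 0`, and `√α/a(α) → σ`. -/
theorem stmt13 (c : ℝ) (hc : 0 < c) (m : Measure ℝ) [IsProbabilityMeasure m]
    (hsupp : m (Set.Iio c) = 0)
    (σsq : ℝ) (hσ : σsq = ∫ ξ, (ξ ^ 2)⁻¹ ∂m) (hσpos : 0 < σsq)
    (α₀ : ℝ) (hα₀ : 0 < α₀) (a : ℝ → ℝ)
    (ha : ∀ α ∈ Set.Ioo 0 α₀,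
      a α ∈ Set.Ioo 0 c ∧
      Integrable (fun ξ => ((ξ - a α) ^ 2)⁻¹) m ∧
      α = (a α) ^ 2 * ∫ ξ, ((ξ - a α) ^ 2)⁻¹ ∂m) :
    (∀ α ∈ Set.Ioo 0 α₀, a α ≤ Real.sqrt α / Real.sqrt σsq) ∧
    (∃ C > 0, ∃ δ > 0, ∀ α ∈ Set.Ioo 0 (min δ α₀),
      0 ≤ α / (a α) ^ 2 - σsq ∧ α / (a α) ^ 2 - σsq ≤ C * Real.sqrt α) ∧
    Tendsto (fun α => Real.sqrt α / a α) (nhdsWithin 0 (Set.Ioi 0))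
      (nhds (Real.sqrt σsq)) := by
  have hae : ∀ᵐ ξ ∂m, c ≤ ξ := by
    rw [ae_iff]
    simpa [not_le, Set.Iio] using hsupp
  have hbounds : ∀ α ∈ Set.Ioo 0 α₀, 0 < a α ∧ σsq ≤ α / a α ^ 2 ∧
      α / a α ^ 2 ≤ σsq + 2 * a α / (c * (c - a α) ^ 2) := by
    intro α hα
    obtain ⟨⟨ha0, hac⟩, hint, hαeq⟩ := ha α hα
    have hdiv : α / a α ^ 2 = ∫ ξ, ((ξ - a α) ^ 2)⁻¹ ∂m := by
      rw [div_eq_iff (by positivity)]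
      linear_combination hαeq
    refine ⟨ha0, ?_, ?_⟩ <;> rw [hdiv, hσ]
    · exact integral_inv_sq_le_integral_inv_sub_sq hae ha0.le hac hint
    · simpa using integral_inv_sub_sq_le hae ha0.le hac hint
  have hsmall : ∀ α ∈ Set.Ioo 0 (min (σsq * c ^ 2 / 4) α₀),
      0 ≤ α / a α ^ 2 - σsq ∧ α / a α ^ 2 - σsq ≤ 8 / (c ^ 3 * √σsq) * √α := by
    intro α ⟨hα0, hαmin⟩
    obtain ⟨ha0, hlow, hup⟩ := hbounds α ⟨hα0, hαmin.trans_le (min_le_right _ _)⟩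
    exact ⟨sub_nonneg.2 hlow,
      div_sq_sub_le_mul_sqrt hc ha0 hσpos (hαmin.le.trans (min_le_left _ _)) hlow hup⟩
  refine ⟨fun α hα => le_sqrt_div_sqrt_of_le_div_sq (hbounds α hα).1 hσpos (hbounds α hα).2.1,
    ⟨_, by positivity, _, by positivity, hsmall⟩, ?_⟩
  have hnear : Set.Ioo 0 (min (σsq * c ^ 2 / 4) α₀) ∈ nhdsWithin (0 : ℝ) (Set.Ioi 0) :=
    Ioo_mem_nhdsGT (lt_min (by positivity) hα₀)
  have hratio : Tendsto (fun α => α / a α ^ 2) (nhdsWithin 0 (Set.Ioi 0)) (nhds σsq) :=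
    tendsto_of_sub_le_mul_sqrt (eventually_of_mem hnear hsmall)
  refine hratio.sqrt.congr' (eventually_of_mem hnear fun α hα => ?_)
  have ha0 := (hbounds α ⟨hα.1, hα.2.trans_le (min_le_right _ _)⟩).1
  rw [Real.sqrt_div' _ (sq_nonneg _), Real.sqrt_sq ha0.le]
end
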